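/- Let σ, x, λ, t ∈ ℂ with |t| < 1, |xt| < 1, and λ t q^m ≠ 1 for all integers m ≥ 0. Then the series ∑_{n=0}^∞ φ_n^{(σ)}(x|q) · (λ;q)_n · t^n/(q;q)_n converges absolutely and its sum equals ((λt;q)_∞/(t;q)_∞) · ₂Φ₁[λ, σ; λt; q; xt]. -/

import Mathlib

noncomputable section

/-- The q-shifted factorial `(a;q)_n`. -/
def qPoch (q a : ℂ) (n : ℕ) : ℂ := ∏ j ∈ Finset.range n, (1 - a * q ^ j)

/-- The infinite q-shifted factorial `(a;q)_∞`. -/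
def qPochInf (q a : ℂ) : ℂ := ∏' j : ℕ, (1 - a * q ^ j)

/-- The q-binomial coefficient `[n k]_q`. -/
def qBinom (q : ℂ) (n k : ℕ) : ℂ := qPoch q q n / (qPoch q q k * qPoch q q (n - k))

/-- The Cauchy polynomials `p_n(x,y)`. -/
def cauchyP (q x y : ℂ) (n : ℕ) : ℂ := ∏ j ∈ Finset.range n, (x - q ^ j * y)

/-- The generalized q-binomial coefficient `[α k]_{-q}`. -/
def genQBinom (q α : ℂ) (k : ℕ) : ℂ :=
  qPoch q (-(q ^ (-α))) k / qPoch q (-q) k * q ^ (α * (k : ℂ) - (k.choose 2 : ℂ))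

/-- The generalized q-polynomials `L̃_n^{(r,s)}(α,x,y,z,a)`. -/
def Ltil (q : ℂ) (r s : ℤ) (α x y z a : ℂ) (n : ℕ) : ℂ :=
  ∑ k ∈ Finset.range (n + 1),
    qBinom q n k * genQBinom q α k *
      q ^ (r * (k.choose 2 : ℤ) - s * ((k + 1).choose 2 : ℤ) + (k.choose 2 : ℤ)) *
      qPoch q a k * cauchyP q x y (n - k) * z ^ k

/-- The basic hypergeometric series `₂Φ₁[a,b;c;q;z]`. -/
def Phi21 (q a b c z : ℂ) : ℂ :=
  ∑' n : ℕ, qPoch q a n * qPoch q b n / (qPoch q c n * qPoch q q n) * z ^ n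

/-- The basic hypergeometric series `₄Φ₃`. -/
def Phi43 (q a₁ a₂ a₃ a₄ b₁ b₂ b₃ z : ℂ) : ℂ :=
  ∑' n : ℕ, qPoch q a₁ n * qPoch q a₂ n * qPoch q a₃ n * qPoch q a₄ n /
    (qPoch q b₁ n * qPoch q b₂ n * qPoch q b₃ n * qPoch q q n) * z ^ n

/-- The trivariate q-polynomials `F_n(x,y,z;q)`. -/
def Ftri (q x y z : ℂ) (n : ℕ) : ℂ :=
  (-1) ^ n * q ^ (-(n.choose 2 : ℤ)) *
    ∑ k ∈ Finset.range (n + 1),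
      qBinom q n k * q ^ (k.choose 2) * (-z) ^ k * cauchyP q y x (n - k)

/-- The Hahn (Al-Salam–Carlitz) polynomials `φ_n^{(σ)}(x|q)`. -/
def hahnPhi (q σ x : ℂ) (n : ℕ) : ℂ :=
  ∑ k ∈ Finset.range (n + 1), qBinom q n k * qPoch q σ k * x ^ k

/-- The q-derivative operator `D_a`. -/
def Dq (q : ℂ) (f : ℂ → ℂ) : ℂ → ℂ := fun a => (f a - f (q * a)) / a

/-- The homogeneous q-difference operator `D_{xy}`. -/
def Dxy (q : ℂ) (f : ℂ → ℂ → ℂ) : ℂ → ℂ → ℂ :=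
  fun x y => (f x (y / q) - f (q * x) y) / (x - y / q)

/-!
Expanding `φ_n^{(σ)}(x|q)` and writing `n = k + m` turns the series into a double series in
`(k, m)`. It converges absolutely: `(a;q)_n` converges as `n → ∞`, hence is bounded, and
`(q;q)_n⁻¹` converges to `(q;q)_∞⁻¹`, hence is bounded as well. Since
`(λ;q)_{k+m} = (λ;q)_k (λq^k;q)_m`, the sum over `m` is the q-binomial series
`₁Φ₀[λq^k; -; q; t] = (λtq^k;q)_∞ / (t;q)_∞`, and `(λtq^k;q)_∞ = (λt;q)_∞ / (λt;q)_k` leaves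
the `k`-th term of `₂Φ₁[λ, σ; λt; q; xt]`.

The q-binomial theorem comes from the functional equation `(1 - z) F(z) = (1 - az) F(qz)` of
`F = ₁Φ₀[a; -; q; ·]`: iterating it gives `(z;q)_N F(z) = (az;q)_N F(q^N z)`, and
`F(q^N z) → F(0) = 1` by dominated convergence.
-/

open Finset Filter Topology

theorem HasSum.sum_antidiagonal {α : Type*} [AddCommMonoid α] [TopologicalSpace α]
    [ContinuousAdd α] [RegularSpace α] {f : ℕ × ℕ → α} {a : α} (hf : HasSum f a) :
    HasSum (fun n => ∑ kl ∈ antidiagonal n, f kl) a :=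
  (HasAntidiagonal.sigmaAntidiagonalEquivProd.hasSum_iff.mpr hf).sigma fun n => by
    simpa [Finset.sum_attach] using hasSum_fintype fun kl : antidiagonal n => f kl

theorem exists_norm_le_of_tendsto {E : Type*} [SeminormedAddCommGroup E] {u : ℕ → E} {x : E}
    (hu : Tendsto u atTop (𝓝 x)) : ∃ C, ∀ n, ‖u n‖ ≤ C := by
  obtain ⟨C, hC⟩ := (Metric.isBounded_range_of_tendsto u hu).exists_norm_le
  exact ⟨C, fun n => hC _ (Set.mem_range_self n)⟩

section QPochhammer

variable {q : ℂ}

theorem qPoch_zero (a : ℂ) : qPoch q a 0 = 1 := prod_range_zero _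

theorem qPoch_succ (a : ℂ) (n : ℕ) : qPoch q a (n + 1) = qPoch q a n * (1 - a * q ^ n) :=
  prod_range_succ _ _

theorem qPoch_add (a : ℂ) (k m : ℕ) :
    qPoch q a (k + m) = qPoch q a k * qPoch q (a * q ^ k) m := by
  simp only [qPoch, prod_range_add, pow_add, mul_assoc]

theorem norm_pow_mul_le (hq : ‖q‖ < 1) (N : ℕ) (z : ℂ) : ‖q ^ N * z‖ ≤ ‖z‖ := by
  rw [norm_mul, norm_pow]
  exact mul_le_of_le_one_left (norm_nonneg z) (pow_le_one₀ (norm_nonneg q) hq.le)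

theorem mul_pow_ne_one (hq : ‖q‖ < 1) {a : ℂ} (ha : ‖a‖ < 1) (n : ℕ) : a * q ^ n ≠ 1 := by
  refine ne_of_apply_ne norm (ne_of_lt ?_)
  rw [norm_mul, norm_pow, norm_one]
  exact mul_lt_one_of_nonneg_of_lt_one_left (norm_nonneg a) ha
    (pow_le_one₀ (norm_nonneg q) hq.le)

theorem qPoch_ne_zero {a : ℂ} (ha : ∀ n : ℕ, a * q ^ n ≠ 1) (n : ℕ) : qPoch q a n ≠ 0 :=
  prod_ne_zero_iff.mpr fun j _ => sub_ne_zero.mpr (ha j).symm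

theorem summable_norm_neg_mul_pow (hq : ‖q‖ < 1) (a : ℂ) :
    Summable fun n : ℕ => ‖-(a * q ^ n)‖ := by
  simpa [norm_mul, norm_pow] using (summable_geometric_of_lt_one (norm_nonneg q) hq).mul_left ‖a‖

theorem hasProd_qPochInf (hq : ‖q‖ < 1) (a : ℂ) :
    HasProd (fun n : ℕ => 1 - a * q ^ n) (qPochInf q a) := by
  have h := multipliable_one_add_of_summable (summable_norm_neg_mul_pow hq a)
  simp only [← sub_eq_add_neg] at h
  exact h.hasProd

theorem tendsto_qPoch (hq : ‖q‖ < 1) (a : ℂ) :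
    Tendsto (qPoch q a) atTop (𝓝 (qPochInf q a)) :=
  (hasProd_qPochInf hq a).tendsto_prod_nat

theorem qPochInf_ne_zero (hq : ‖q‖ < 1) {a : ℂ} (ha : ∀ n : ℕ, a * q ^ n ≠ 1) :
    qPochInf q a ≠ 0 := by
  simpa [qPochInf, ← sub_eq_add_neg] using tprod_one_add_ne_zero_of_summable
    (fun n => by simpa [← sub_eq_add_neg] using sub_ne_zero.mpr (ha n).symm)
    (summable_norm_neg_mul_pow hq a)

theorem qPochInf_eq_qPoch_mul (hq : ‖q‖ < 1) (a : ℂ) (k : ℕ) :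
    qPochInf q a = qPoch q a k * qPochInf q (a * q ^ k) := by
  refine (hasProd_qPochInf hq a).unique (HasProd.prod_range_mul ?_)
  convert hasProd_qPochInf hq (a * q ^ k) using 3
  ring

theorem exists_norm_qPoch_le (hq : ‖q‖ < 1) (a : ℂ) : ∃ C, ∀ n, ‖qPoch q a n‖ ≤ C :=
  exists_norm_le_of_tendsto (tendsto_qPoch hq a)

theorem exists_norm_inv_qPoch_self_le (hq : ‖q‖ < 1) : ∃ C, ∀ n, ‖(qPoch q q n)⁻¹‖ ≤ C :=
  exists_norm_le_of_tendsto
    ((tendsto_qPoch hq q).inv₀ (qPochInf_ne_zero hq (mul_pow_ne_one hq hq)))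

theorem exists_norm_qPoch_div_qPoch_self_le (hq : ‖q‖ < 1) (a : ℂ) :
    ∃ C, ∀ n, ‖qPoch q a n / qPoch q q n‖ ≤ C :=
  exists_norm_le_of_tendsto ((tendsto_qPoch hq a).div (tendsto_qPoch hq q)
    (qPochInf_ne_zero hq (mul_pow_ne_one hq hq)))

end QPochhammer

section QBinomialTheorem

variable {q : ℂ}

/-- The series `₁Φ₀[a; -; q; z]`. -/
def Phi10 (q a z : ℂ) : ℂ := ∑' n : ℕ, qPoch q a n / qPoch q q n * z ^ n

theorem summable_norm_Phi10_terms (hq : ‖q‖ < 1) (a : ℂ) {z : ℂ} (hz : ‖z‖ < 1) :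
    Summable fun n => ‖qPoch q a n / qPoch q q n * z ^ n‖ := by
  obtain ⟨C, hC⟩ := exists_norm_qPoch_div_qPoch_self_le hq a
  refine .of_nonneg_of_le (fun _ => norm_nonneg _) (fun n => ?_)
    ((summable_geometric_of_lt_one (norm_nonneg z) hz).mul_left C)
  rw [norm_mul, norm_pow]
  exact mul_le_mul_of_nonneg_right (hC n) (by positivity)

theorem hasSum_Phi10 (hq : ‖q‖ < 1) (a : ℂ) {z : ℂ} (hz : ‖z‖ < 1) :
    HasSum (fun n => qPoch q a n / qPoch q q n * z ^ n) (Phi10 q a z) :=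
  (summable_norm_Phi10_terms hq a hz).of_norm.hasSum

theorem qPoch_div_qPoch_self_succ_mul (hq : ‖q‖ < 1) (a : ℂ) (n : ℕ) :
    qPoch q a (n + 1) / qPoch q q (n + 1) * (1 - q ^ (n + 1)) =
      qPoch q a n / qPoch q q n * (1 - a * q ^ n) := by
  have h₁ := qPoch_ne_zero (mul_pow_ne_one hq hq) n
  have h₂ : 1 - q ^ (n + 1) ≠ 0 := by
    rw [pow_succ']
    exact sub_ne_zero.mpr (mul_pow_ne_one hq hq n).symm
  rw [qPoch_succ, qPoch_succ, ← pow_succ']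
  field_simp

theorem one_sub_mul_Phi10 (hq : ‖q‖ < 1) (a : ℂ) {z : ℂ} (hz : ‖z‖ < 1) :
    (1 - z) * Phi10 q a z = (1 - a * z) * Phi10 q a (q * z) := by
  have hqz : ‖q * z‖ < 1 := by simpa using (norm_pow_mul_le hq 1 z).trans_lt hz
  have hdiff : HasSum (fun n => qPoch q a n / qPoch q q n * (1 - a * q ^ n) * z ^ (n + 1))
      (Phi10 q a z - Phi10 q a (q * z)) := by
    have h := (hasSum_nat_add_iff' 1).mpr ((hasSum_Phi10 hq a hz).sub (hasSum_Phi10 hq a hqz))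
    simp only [sum_range_one, pow_zero, sub_self, sub_zero] at h
    refine h.congr_fun fun n => ?_
    rw [← qPoch_div_qPoch_self_succ_mul hq, mul_pow]
    ring
  have hshift : HasSum (fun n => qPoch q a n / qPoch q q n * (1 - a * q ^ n) * z ^ (n + 1))
      (z * Phi10 q a z - a * z * Phi10 q a (q * z)) := by
    refine (((hasSum_Phi10 hq a hz).mul_left z).sub
      ((hasSum_Phi10 hq a hqz).mul_left (a * z))).congr_fun fun n => ?_
    ring
  linear_combination hdiff.unique hshift

theorem qPoch_mul_Phi10 (hq : ‖q‖ < 1) (a : ℂ) {z : ℂ} (hz : ‖z‖ < 1) (N : ℕ) :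
    qPoch q z N * Phi10 q a z = qPoch q (a * z) N * Phi10 q a (q ^ N * z) := by
  induction N with
  | zero => simp [qPoch_zero]
  | succ N ih =>
    have h := one_sub_mul_Phi10 hq a ((norm_pow_mul_le hq N z).trans_lt hz)
    rw [qPoch_succ, qPoch_succ, pow_succ', mul_assoc q]
    linear_combination (1 - z * q ^ N) * ih + qPoch q (a * z) N * h

theorem tendsto_Phi10_pow_mul (hq : ‖q‖ < 1) (a : ℂ) {z : ℂ} (hz : ‖z‖ < 1) :
    Tendsto (fun N : ℕ => Phi10 q a (q ^ N * z)) atTop (𝓝 1) := by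
  obtain ⟨C, hC⟩ := exists_norm_qPoch_div_qPoch_self_le hq a
  have hlim : Tendsto (fun N : ℕ => q ^ N * z) atTop (𝓝 0) := by
    simpa using (tendsto_pow_atTop_nhds_zero_of_norm_lt_one hq).mul_const z
  have hdom := tendsto_tsum_of_dominated_convergence
    ((summable_geometric_of_lt_one (norm_nonneg z) hz).mul_left C)
    (fun n => ((hlim.pow n).const_mul (qPoch q a n / qPoch q q n)))
    (Eventually.of_forall fun N n => ?_)
  · have h0 : ∑' n, qPoch q a n / qPoch q q n * 0 ^ n = 1 := by
      rw [tsum_eq_single 0 fun n hn => by simp [hn]]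
      simp [qPoch_zero]
    simpa only [Phi10, h0] using hdom
  · rw [norm_mul, norm_pow]
    exact mul_le_mul (hC n) (pow_le_pow_left₀ (norm_nonneg _) (norm_pow_mul_le hq N z) n)
      (by positivity) ((norm_nonneg _).trans (hC n))

theorem Phi10_eq_qPochInf_div (hq : ‖q‖ < 1) (a : ℂ) {z : ℂ} (hz : ‖z‖ < 1) :
    Phi10 q a z = qPochInf q (a * z) / qPochInf q z := by
  rw [eq_div_iff (qPochInf_ne_zero hq (mul_pow_ne_one hq hz)), mul_comm]
  refine tendsto_nhds_unique ((tendsto_qPoch hq z).mul_const _) ?_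
  simpa [qPoch_mul_Phi10 hq a hz] using
    (tendsto_qPoch hq (a * z)).mul (tendsto_Phi10_pow_mul hq a hz)

end QBinomialTheorem

section HahnGeneratingFunction

variable {q : ℂ}

/-- The term `[k+m k]_q (σ;q)_k x^k (λ;q)_{k+m} t^{k+m} / (q;q)_{k+m}` of the expanded series. -/
def hahnDoubleTerm (q σ x lam t : ℂ) (p : ℕ × ℕ) : ℂ :=
  qPoch q lam (p.1 + p.2) * qPoch q σ p.1 * x ^ p.1 * t ^ (p.1 + p.2) /
    (qPoch q q p.1 * qPoch q q p.2)

theorem hahn_term_eq_sum_antidiagonal (hq : ‖q‖ < 1) (σ x lam t : ℂ) (n : ℕ) :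
    hahnPhi q σ x n * qPoch q lam n * t ^ n / qPoch q q n =
      ∑ p ∈ antidiagonal n, hahnDoubleTerm q σ x lam t p := by
  rw [Nat.sum_antidiagonal_eq_sum_range_succ_mk, hahnPhi, sum_mul, sum_mul, sum_div]
  refine sum_congr rfl fun k hk => ?_
  have hkn : k + (n - k) = n := Nat.add_sub_cancel' (Nat.lt_succ_iff.mp (mem_range.mp hk))
  have hq' := qPoch_ne_zero (mul_pow_ne_one hq hq)
  rw [hahnDoubleTerm, qBinom, hkn]
  field_simp [hq' n, hq' k, hq' (n - k)]

theorem summable_norm_hahnDoubleTerm (hq : ‖q‖ < 1) (σ x lam : ℂ) {t : ℂ} (ht : ‖t‖ < 1)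
    (hxt : ‖x * t‖ < 1) : Summable fun p => ‖hahnDoubleTerm q σ x lam t p‖ := by
  obtain ⟨A, hA⟩ := exists_norm_qPoch_le hq lam
  obtain ⟨B, hB⟩ := exists_norm_qPoch_le hq σ
  obtain ⟨D, hD⟩ := exists_norm_inv_qPoch_self_le hq
  have hA₀ : 0 ≤ A := (norm_nonneg _).trans (hA 0)
  have hB₀ : 0 ≤ B := (norm_nonneg _).trans (hB 0)
  have hD₀ : 0 ≤ D := (norm_nonneg _).trans (hD 0)
  have hbound : ∀ p : ℕ × ℕ,
      ‖hahnDoubleTerm q σ x lam t p‖ ≤ A * B * D * D * (‖x * t‖ ^ p.1 * ‖t‖ ^ p.2) := by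
    rintro ⟨k, m⟩
    have hsplit : hahnDoubleTerm q σ x lam t (k, m) = qPoch q lam (k + m) * qPoch q σ k *
        (qPoch q q k)⁻¹ * (qPoch q q m)⁻¹ * ((x * t) ^ k * t ^ m) := by
      simp only [hahnDoubleTerm, div_eq_mul_inv, mul_inv, mul_pow, pow_add]
      ring
    rw [hsplit]
    simp only [norm_mul, norm_pow]
    gcongr
    exacts [hA _, hB k, hD k, hD m]
  refine .of_nonneg_of_le (fun _ => norm_nonneg _) hbound (.mul_left _ ?_)
  exact (summable_geometric_of_lt_one (norm_nonneg _) hxt).mul_of_nonneg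
    (summable_geometric_of_lt_one (norm_nonneg _) ht) (fun _ => by positivity)
    (fun _ => by positivity)

theorem tsum_hahnDoubleTerm_right (hq : ‖q‖ < 1) (σ x lam : ℂ) {t : ℂ} (ht : ‖t‖ < 1)
    (hlt : ∀ m : ℕ, lam * t * q ^ m ≠ 1) (k : ℕ) :
    ∑' m : ℕ, hahnDoubleTerm q σ x lam t (k, m) =
      qPochInf q (lam * t) / qPochInf q t *
        (qPoch q lam k * qPoch q σ k / (qPoch q (lam * t) k * qPoch q q k) * (x * t) ^ k) := by
  have hq' := qPoch_ne_zero (mul_pow_ne_one hq hq)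
  have hterm : ∀ m : ℕ, hahnDoubleTerm q σ x lam t (k, m) =
      qPoch q lam k * qPoch q σ k * (x * t) ^ k / qPoch q q k *
        (qPoch q (lam * q ^ k) m / qPoch q q m * t ^ m) := fun m => by
    rw [hahnDoubleTerm, qPoch_add, pow_add, mul_pow]
    field_simp [hq' k, hq' m]
  have hP := qPoch_ne_zero hlt k
  rw [tsum_congr hterm, tsum_mul_left, ← Phi10, Phi10_eq_qPochInf_div hq _ ht,
    qPochInf_eq_qPoch_mul hq (lam * t) k, mul_right_comm lam]
  generalize qPoch q (lam * t) k = P at hP ⊢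
  field_simp [hq' k, qPochInf_ne_zero hq (mul_pow_ne_one hq ht)]

end HahnGeneratingFunction

theorem stmt13_general (q : ℂ) (hq1 : ‖q‖ < 1) (σ x lam t : ℂ)
    (ht : ‖t‖ < 1) (hxt : ‖x * t‖ < 1) (hlt : ∀ m : ℕ, lam * t * q ^ m ≠ 1) :
    Summable (fun n : ℕ => ‖hahnPhi q σ x n * qPoch q lam n * t ^ n / qPoch q q n‖) ∧
    ∑' n : ℕ, hahnPhi q σ x n * qPoch q lam n * t ^ n / qPoch q q n =
      qPochInf q (lam * t) / qPochInf q t * Phi21 q lam σ (lam * t) (x * t) := by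
  have hF := summable_norm_hahnDoubleTerm hq1 σ x lam ht hxt
  simp_rw [hahn_term_eq_sum_antidiagonal hq1 σ x lam t]
  refine ⟨hF.hasSum.sum_antidiagonal.summable.of_nonneg_of_le (fun _ => norm_nonneg _)
    fun n => norm_sum_le _ _, ?_⟩
  rw [hF.of_norm.hasSum.sum_antidiagonal.tsum_eq, hF.of_norm.tsum_prod,
    tsum_congr (tsum_hahnDoubleTerm_right hq1 σ x lam ht hlt), tsum_mul_left, Phi21]

/-- Srivastava–Agarwal type generating function for Hahn polynomials. -/
theorem stmt13 (q : ℂ) (hq0 : q ≠ 0) (hq1 : ‖q‖ < 1) (σ x lam t : ℂ)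
    (ht : ‖t‖ < 1) (hxt : ‖x * t‖ < 1) (hlt : ∀ m : ℕ, lam * t * q ^ m ≠ 1) :
    Summable (fun n : ℕ => ‖hahnPhi q σ x n * qPoch q lam n * t ^ n / qPoch q q n‖) ∧
    ∑' n : ℕ, hahnPhi q σ x n * qPoch q lam n * t ^ n / qPoch q q n =
      qPochInf q (lam * t) / qPochInf q t * Phi21 q lam σ (lam * t) (x * t) :=
  stmt13_general q hq1 σ x lam t ht hxt hlt
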